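/- Let T be the linear operator with dom(T) = dom(D₀) and Tu = D₀(𝓜u) + 𝓝u. Assume there is c > 0 with Re⟨Tu, u⟩ ≥ c‖u‖² for all u ∈ dom(D₀). Then dom(D₀) ⊆ dom(T*), for every φ ∈ dom(D₀) one has T*φ = −𝓜*(D₀φ) + 2ν𝓜*φ + 𝓝*φ, and Re⟨T*φ, φ⟩ = Re⟨Tφ, φ⟩ ≥ c‖φ‖² for all φ ∈ dom(D₀). -/

import Mathlib

open Filter

/-- The operator `T` with domain `dom D₀`, `T u = D₀(𝓜 u) + 𝓝 u`. -/
noncomputable def T0 {K : Type*} [NormedAddCommGroup K] [InnerProductSpace ℂ K]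
    (D₀ : K →ₗ.[ℂ] K) (Mc N : K →L[ℂ] K)
    (hM : ∀ u ∈ D₀.domain, Mc u ∈ D₀.domain) : K →ₗ.[ℂ] K where
  domain := D₀.domain
  toFun :=
    D₀.toFun.comp (LinearMap.codRestrict D₀.domain
        ((Mc : K →ₗ[ℂ] K).comp D₀.domain.subtype) (fun u => hM _ u.2))
    + (N : K →ₗ[ℂ] K).comp D₀.domain.subtype

/-!
The formula for `T*` is forced by moving everything in `⟪φ, D₀(𝓜u) + 𝓝u⟫` to the left:
`D₀* = 2ν - D₀` turns it into `⟪2ν φ - D₀φ, 𝓜u⟫ + ⟪φ, 𝓝u⟫`, and then `𝓜*`, `𝓝*` do the rest.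
Uniqueness of the adjoint on the dense domain identifies `T*φ`, and since `φ` lies in both
domains, `⟪T*φ, φ⟫` is the conjugate of `⟪Tφ, φ⟫`.
-/

namespace LinearPMap

variable {𝕜 E : Type*} [RCLike 𝕜] [NormedAddCommGroup E] [InnerProductSpace 𝕜 E] [CompleteSpace E]

theorem re_inner_adjoint_apply_self {T : E →ₗ.[𝕜] E} (hT : Dense (T.domain : Set E))
    (y : T.adjoint.domain) (x : T.domain) (hxy : (y : E) = x) :
    RCLike.re (inner 𝕜 (T.adjoint y) (y : E)) = RCLike.re (inner 𝕜 (T x) (x : E)) := by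
  rw [hxy, adjoint_isFormalAdjoint hT y x, ← hxy]
  exact inner_re_symm _ _

theorem inner_apply_eq_inner_smul_sub_apply {D : E →ₗ.[𝕜] E} (hD : Dense (D.domain : Set E))
    {a : 𝕜} (hadjdom : D.adjoint.domain = D.domain)
    (hadjval : ∀ (u : E) (hu : u ∈ D.domain) (hu' : u ∈ D.adjoint.domain),
      D.adjoint ⟨u, hu'⟩ = a • u - D ⟨u, hu⟩)
    (φ : E) (hφ : φ ∈ D.domain) (v : D.domain) :
    inner 𝕜 φ (D v) = inner 𝕜 (a • φ - D ⟨φ, hφ⟩) (v : E) := by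
  have hφ' : φ ∈ D.adjoint.domain := hadjdom ▸ hφ
  rw [← hadjval φ hφ hφ']
  exact (adjoint_isFormalAdjoint hD ⟨φ, hφ'⟩ v).symm

end LinearPMap

open ContinuousLinearMap in
theorem inner_T0_right {K : Type*} [NormedAddCommGroup K] [InnerProductSpace ℂ K] [CompleteSpace K]
    {D₀ : K →ₗ.[ℂ] K} (hD₀ : Dense (D₀.domain : Set K)) {a : ℂ}
    (hadjdom : D₀.adjoint.domain = D₀.domain)
    (hadjval : ∀ (u : K) (hu : u ∈ D₀.domain) (hu' : u ∈ D₀.adjoint.domain),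
      D₀.adjoint ⟨u, hu'⟩ = a • u - D₀ ⟨u, hu⟩)
    (Mc N : K →L[ℂ] K) (hMdom : ∀ u ∈ D₀.domain, Mc u ∈ D₀.domain)
    (φ : K) (hφ : φ ∈ D₀.domain) (u : (T0 D₀ Mc N hMdom).domain) :
    inner ℂ φ (T0 D₀ Mc N hMdom u)
      = inner ℂ (-(adjoint Mc (D₀ ⟨φ, hφ⟩)) + a • adjoint Mc φ + adjoint N φ) (u : K) := by
  have hT : T0 D₀ Mc N hMdom u = D₀ ⟨Mc u, hMdom u u.2⟩ + N u := rfl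
  rw [hT, inner_add_right, LinearPMap.inner_apply_eq_inner_smul_sub_apply hD₀ hadjdom hadjval φ hφ]
  simp only [inner_add_left, inner_neg_left, inner_sub_left, inner_smul_left,
    adjoint_inner_left]
  ring

theorem stmt8_general
    {K : Type*} [NormedAddCommGroup K] [InnerProductSpace ℂ K] [CompleteSpace K]
    (ν : ℝ)
    (D₀ : K →ₗ.[ℂ] K) (hD₀dense : Dense (D₀.domain : Set K))
    -- the adjoint of `D₀` is `2ν - D₀`
    (hadjdom : D₀.adjoint.domain = D₀.domain)
    (hadjval : ∀ (u : K) (hu : u ∈ D₀.domain) (hu' : u ∈ D₀.adjoint.domain),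
      D₀.adjoint ⟨u, hu'⟩ = ((2 * ν : ℝ) : ℂ) • u - D₀ ⟨u, hu⟩)
    (Mc N : K →L[ℂ] K)
    (hMdom : ∀ u ∈ D₀.domain, Mc u ∈ D₀.domain)
    (c : ℝ)
    (hpos : ∀ (u : K) (hu : u ∈ D₀.domain),
      c * ‖u‖ ^ 2 ≤ (inner ℂ (T0 D₀ Mc N hMdom ⟨u, hu⟩) u : ℂ).re) :
    (∀ φ ∈ D₀.domain, φ ∈ (T0 D₀ Mc N hMdom).adjoint.domain) ∧
    (∀ (φ : K) (hφ : φ ∈ D₀.domain) (hφ' : φ ∈ (T0 D₀ Mc N hMdom).adjoint.domain),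
      (T0 D₀ Mc N hMdom).adjoint ⟨φ, hφ'⟩
        = -(ContinuousLinearMap.adjoint Mc (D₀ ⟨φ, hφ⟩))
          + ((2 * ν : ℝ) : ℂ) • ContinuousLinearMap.adjoint Mc φ
          + ContinuousLinearMap.adjoint N φ) ∧
    (∀ (φ : K) (hφ : φ ∈ D₀.domain) (hφ' : φ ∈ (T0 D₀ Mc N hMdom).adjoint.domain),
      (inner ℂ ((T0 D₀ Mc N hMdom).adjoint ⟨φ, hφ'⟩) φ : ℂ).re
        = (inner ℂ (T0 D₀ Mc N hMdom ⟨φ, hφ⟩) φ : ℂ).re ∧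
      c * ‖φ‖ ^ 2 ≤ (inner ℂ (T0 D₀ Mc N hMdom ⟨φ, hφ⟩) φ : ℂ).re) := by
  set T := T0 D₀ Mc N hMdom
  have hT : Dense (T.domain : Set K) := hD₀dense
  have hform := fun φ hφ u =>
    (inner_T0_right hD₀dense hadjdom hadjval Mc N hMdom φ hφ u).symm
  refine ⟨fun φ hφ => LinearPMap.mem_adjoint_domain_of_exists _ ⟨_, hform φ hφ⟩,
    fun φ hφ hφ' => LinearPMap.adjoint_apply_eq hT ⟨φ, hφ'⟩ (hform φ hφ),
    fun φ hφ hφ' => ⟨?_, hpos φ hφ⟩⟩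
  exact LinearPMap.re_inner_adjoint_apply_self hT ⟨φ, hφ'⟩ ⟨φ, hφ⟩ rfl

theorem stmt8
    {K : Type*} [NormedAddCommGroup K] [InnerProductSpace ℂ K] [CompleteSpace K]
    (ν : ℝ) (hν : 0 < ν)
    (D₀ : K →ₗ.[ℂ] K) (hD₀dense : Dense (D₀.domain : Set K)) (hD₀closed : D₀.IsClosed)
    -- the adjoint of `D₀` is `2ν - D₀`
    (hadjdom : D₀.adjoint.domain = D₀.domain)
    (hadjval : ∀ (u : K) (hu : u ∈ D₀.domain) (hu' : u ∈ D₀.adjoint.domain),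
      D₀.adjoint ⟨u, hu'⟩ = ((2 * ν : ℝ) : ℂ) • u - D₀ ⟨u, hu⟩)
    (Mc N Mop : K →L[ℂ] K)
    (hMdom : ∀ u ∈ D₀.domain, Mc u ∈ D₀.domain)
    (hMcomm : ∀ u : D₀.domain, Mc (D₀ u) = D₀ ⟨Mc u, hMdom u u.2⟩ + Mop u)
    (c : ℝ) (hc : 0 < c)
    (hpos : ∀ (u : K) (hu : u ∈ D₀.domain),
      c * ‖u‖ ^ 2 ≤ (inner ℂ (T0 D₀ Mc N hMdom ⟨u, hu⟩) u : ℂ).re) :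
    (∀ φ ∈ D₀.domain, φ ∈ (T0 D₀ Mc N hMdom).adjoint.domain) ∧
    (∀ (φ : K) (hφ : φ ∈ D₀.domain) (hφ' : φ ∈ (T0 D₀ Mc N hMdom).adjoint.domain),
      (T0 D₀ Mc N hMdom).adjoint ⟨φ, hφ'⟩
        = -(ContinuousLinearMap.adjoint Mc (D₀ ⟨φ, hφ⟩))
          + ((2 * ν : ℝ) : ℂ) • ContinuousLinearMap.adjoint Mc φ
          + ContinuousLinearMap.adjoint N φ) ∧
    (∀ (φ : K) (hφ : φ ∈ D₀.domain) (hφ' : φ ∈ (T0 D₀ Mc N hMdom).adjoint.domain),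
      (inner ℂ ((T0 D₀ Mc N hMdom).adjoint ⟨φ, hφ'⟩) φ : ℂ).re
        = (inner ℂ (T0 D₀ Mc N hMdom ⟨φ, hφ⟩) φ : ℂ).re ∧
      c * ‖φ‖ ^ 2 ≤ (inner ℂ (T0 D₀ Mc N hMdom ⟨φ, hφ⟩) φ : ℂ).re) :=
  stmt8_general ν D₀ hD₀dense hadjdom hadjval Mc N hMdom c hpos
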